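/- arXiv:2310.04156 — 2 statements merged into one kernel-verified Lean document; each statement's English description precedes it below -/
import Mathlib

section
/- Let Z be a finite set, d ≥ 1, and fix weights p : Z → ℝ with p_z ≥ 0 and Σ_{z∈Z} p_z = 1. Fix Hermitian d×d complex matrices A_z^{(i)} for z ∈ Z and i = 1,…,R, and real numbers b_1,…,b_R. Let K be the set of all families (ρ_z)_{z∈Z} of d×d density matrices satisfying Σ_{z∈Z} p_z Tr[A_z^{(i)} ρ_z] = b_i for every i = 1,…,R. If K is nonempty, then there exists a family (σ_z)_{z∈Z} ∈ K such that at most R of the matrices σ_z are not pure (i.e., all but at most R of them satisfy Tr[σ_z²] = 1). -/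
/-!
Among the feasible ensembles, which form a nonempty compact set, Krein–Milman provides an extreme
point `σ`. A mixed density matrix `M` has two positive eigenvalues, so moving weight between them
gives a nonzero traceless Hermitian `H` with `M ± H ≥ 0`. If more than `R` of the `σ z` were
mixed, the vectors `(p z · Tr[A_z^{(i)} H_z])_i` of these directions, which are real because
`A_z^{(i)}` and `H_z` are Hermitian, would be linearly dependent in `ℝ^R`; a suitably normalised
dependence `c` makes `σ ± (c z • H_z)_z` both feasible, contradicting extremality.
-/

open Matrix ComplexOrder

instance Matrix.locallyConvexSpace {𝕜 m n E : Type*} [Semiring 𝕜] [PartialOrder 𝕜]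
    [AddCommMonoid E] [Module 𝕜 E] [TopologicalSpace E] [LocallyConvexSpace 𝕜 E] :
    LocallyConvexSpace 𝕜 (Matrix m n E) :=
  inferInstanceAs (LocallyConvexSpace 𝕜 (m → n → E))

theorem eq_zero_of_add_mem_of_sub_mem_of_mem_extremePoints {E : Type*} [AddCommGroup E]
    [Module ℝ E] {A : Set E} {x v : E} (hx : x ∈ A.extremePoints ℝ) (hadd : x + v ∈ A)
    (hsub : x - v ∈ A) : v = 0 := by
  have hseg : x ∈ openSegment ℝ (x + v) (x - v) :=
    ⟨1 / 2, 1 / 2, by norm_num, by norm_num, by norm_num, by module⟩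
  have := (mem_extremePoints.mp hx).2 _ hadd _ hsub hseg
  simpa using this.1

theorem exists_sum_smul_eq_zero_of_finrank_lt_card {ι V : Type*} [Fintype ι] [AddCommGroup V]
    [Module ℝ V] [FiniteDimensional ℝ V] {s : Finset ι} (hs : Module.finrank ℝ V < s.card)
    (v : ι → V) :
    ∃ c : ι → ℝ, ∑ i, c i • v i = 0 ∧ (∀ i, |c i| ≤ 1) ∧ (∀ i ∉ s, c i = 0) ∧
      ∃ i ∈ s, c i ≠ 0 := by
  classical
  have hdep : ¬ LinearIndepOn ℝ v s := fun hv => hs.not_ge (by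
    simpa using hv.fintype_card_le_finrank)
  obtain ⟨f, hf, i, hi, hfi⟩ : ∃ f : ι → ℝ, ∑ j ∈ s, f j • v j = 0 ∧ ∃ i ∈ s, f i ≠ 0 := by
    simpa [linearIndepOn_finset_iff] using hdep
  set m := ∑ j ∈ s, |f j|
  have hle : ∀ j ∈ s, |f j| ≤ m := fun j hj =>
    Finset.single_le_sum (fun k _ => abs_nonneg (f k)) hj
  have hm : 0 < m := (abs_pos.mpr hfi).trans_le (hle i hi)
  refine ⟨fun j => if j ∈ s then f j / m else 0, ?_, fun j => ?_, fun j hj => if_neg hj,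
    i, hi, by simpa [hi] using ⟨hfi, hm.ne'⟩⟩
  · simp only [ite_smul, zero_smul, Finset.sum_ite_mem, Finset.univ_inter, div_eq_inv_mul,
      mul_smul, ← Finset.smul_sum, hf, smul_zero]
  · dsimp only
    split_ifs with hj
    · rw [abs_div, abs_of_pos hm, div_le_one hm]
      exact hle j hj
    · simp

section
variable {n : Type*}

theorem Matrix.PosSemidef.norm_apply_sq_le {M : Matrix n n ℂ} (hM : M.PosSemidef) (i j : n) :
    ‖M i j‖ ^ 2 ≤ (M i i).re * (M j j).re := by
  have hdet := (hM.submatrix ![i, j]).det_nonneg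
  have hji : M j i = star (M i j) := (hM.1.apply j i).symm
  have hii := (Complex.nonneg_iff.mp (hM.diag_nonneg (i := i))).2
  have hjj := (Complex.nonneg_iff.mp (hM.diag_nonneg (i := j))).2
  rw [det_fin_two, Complex.nonneg_iff] at hdet
  simp [hji, Complex.mul_re, ← hii, ← hjj] at hdet
  rw [Complex.sq_norm, Complex.normSq_apply]
  linarith [hdet.1]

theorem Matrix.PosSemidef.add_smul_of_abs_le_one {M H : Matrix n n ℂ} (hadd : (M + H).PosSemidef)
    (hsub : (M - H).PosSemidef) {t : ℝ} (ht : |t| ≤ 1) : (M + t • H).PosSemidef := by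
  obtain ⟨ht₁, ht₂⟩ := abs_le.mp ht
  have hcomb : M + t • H = ((1 + t) / 2) • (M + H) + ((1 - t) / 2) • (M - H) := by module
  rw [hcomb]
  exact (hadd.smul (by linarith)).add (hsub.smul (by linarith))

variable [Fintype n]

theorem Matrix.IsHermitian.ofReal_re_trace_mul {A H : Matrix n n ℂ} (hA : A.IsHermitian)
    (hH : H.IsHermitian) : (((A * H).trace.re : ℝ) : ℂ) = (A * H).trace := by
  refine Complex.conj_eq_iff_re.mp ?_
  rw [← Complex.star_def, ← trace_conjTranspose, conjTranspose_mul, hA.eq, hH.eq, trace_mul_comm]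

theorem isClosed_setOf_posSemidef : IsClosed {M : Matrix n n ℂ | M.PosSemidef} := by
  simp only [posSemidef_iff_dotProduct_mulVec, Set.ofPred_and, Set.ofPred_forall]
  exact (isClosed_eq continuous_id.matrix_conjTranspose continuous_id).inter
    (isClosed_iInter fun x => isClosed_le continuous_const
      (continuous_const.dotProduct (continuous_id.matrix_mulVec continuous_const)))

theorem Matrix.PosSemidef.norm_apply_le_one {M : Matrix n n ℂ} (hM : M.PosSemidef)
    (htr : M.trace = 1) (i j : n) : ‖M i j‖ ≤ 1 := by
  have hdiag : ∀ k, 0 ≤ (M k k).re ∧ (M k k).re ≤ 1 := fun k => by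
    have hsum : ∑ l, (M l l).re = 1 := by simpa [trace] using congrArg Complex.re htr
    have hnonneg : ∀ l, 0 ≤ (M l l).re := fun l => (Complex.nonneg_iff.mp hM.diag_nonneg).1
    exact ⟨hnonneg k, hsum ▸ Finset.single_le_sum (fun l _ => hnonneg l) (Finset.mem_univ k)⟩
  have hsq : ‖M i j‖ ^ 2 ≤ 1 := (hM.norm_apply_sq_le i j).trans
    (mul_le_one₀ (hdiag i).2 (hdiag j).1 (hdiag j).2)
  exact (sq_le_one_iff₀ (norm_nonneg _)).mp hsq

theorem isCompact_setOf_posSemidef_trace_eq_one :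
    IsCompact {M : Matrix n n ℂ | M.PosSemidef ∧ M.trace = 1} := by
  have hclosed : IsClosed {M : Matrix n n ℂ | M.PosSemidef ∧ M.trace = 1} :=
    isClosed_setOf_posSemidef.inter (isClosed_eq continuous_id.matrix_trace continuous_const)
  refine (isCompact_univ_pi fun _ : n => isCompact_univ_pi fun _ : n =>
    isCompact_closedBall (0 : ℂ) 1).of_isClosed_subset hclosed fun M hM i _ j _ => ?_
  simpa using hM.1.norm_apply_le_one hM.2 i j

theorem exists_ne_pos_pos_of_sum_sq_ne_one {w : n → ℝ} (hw : ∀ i, 0 ≤ w i)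
    (hsum : ∑ i, w i = 1) (hsq : ∑ i, w i ^ 2 ≠ 1) : ∃ j k, j ≠ k ∧ 0 < w j ∧ 0 < w k := by
  by_contra! h
  have hoff : ∀ i j, i ≠ j → w i * w j = 0 := fun i j hij => by
    rcases (hw i).eq_or_lt with hi | hi
    · rw [← hi, zero_mul]
    · rw [le_antisymm (h i j hij hi) (hw j), mul_zero]
  apply hsq
  calc ∑ i, w i ^ 2 = ∑ i, ∑ j, w i * w j := by
        refine Finset.sum_congr rfl fun i _ => ?_
        rw [Finset.sum_eq_single i (fun j _ hji => hoff i j hji.symm) (by simp), sq]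
    _ = (∑ i, w i) * ∑ j, w j := by rw [Finset.sum_mul_sum]
    _ = 1 := by rw [hsum, one_mul]

theorem exists_ne_zero_sum_eq_zero_abs_le {w : n → ℝ} {j k : n} (hjk : j ≠ k) (hj : 0 < w j)
    (hk : 0 < w k) (hw : ∀ i, 0 ≤ w i) :
    ∃ δ : n → ℝ, δ ≠ 0 ∧ ∑ i, δ i = 0 ∧ ∀ i, |δ i| ≤ w i := by
  classical
  obtain ⟨t, ht, htj, htk⟩ : ∃ t, 0 < t ∧ t ≤ w j ∧ t ≤ w k :=
    ⟨min (w j) (w k), lt_min hj hk, min_le_left _ _, min_le_right _ _⟩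
  refine ⟨Pi.single j t - Pi.single k t, fun h => ?_, by simp, fun i => ?_⟩
  · simpa [Pi.single_eq_of_ne hjk, ht.ne'] using congrFun h j
  · rcases eq_or_ne i j with rfl | hij
    · simpa [Pi.single_eq_of_ne hjk, abs_of_pos ht] using htj
    rcases eq_or_ne i k with rfl | hik
    · simpa [hij, abs_of_pos ht] using htk
    · simpa [hij, hik] using hw i

variable [DecidableEq n]

theorem Matrix.trace_conjStarAlgAut (U : unitaryGroup n ℂ) (X : Matrix n n ℂ) :
    (Unitary.conjStarAlgAut ℂ _ U X).trace = X.trace := by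
  rw [Unitary.conjStarAlgAut_apply, trace_mul_cycle, Unitary.coe_star_mul_self, one_mul]

theorem Matrix.IsHermitian.trace_mul_self {M : Matrix n n ℂ} (hM : M.IsHermitian) :
    (M * M).trace = ∑ i, ((hM.eigenvalues i ^ 2 : ℝ) : ℂ) := by
  conv_lhs => rw [hM.spectral_theorem]
  rw [← map_mul, trace_conjStarAlgAut, diagonal_mul_diagonal, trace_diagonal]
  simp [sq]

theorem Matrix.PosSemidef.exists_isHermitian_ne_zero_trace_eq_zero {M : Matrix n n ℂ}
    (hM : M.PosSemidef) (htr : M.trace = 1) (hmixed : (M * M).trace ≠ 1) :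
    ∃ H : Matrix n n ℂ, H.IsHermitian ∧ H ≠ 0 ∧ H.trace = 0 ∧
      (M + H).PosSemidef ∧ (M - H).PosSemidef := by
  set w := hM.1.eigenvalues
  have hsum : ∑ i, w i = 1 := by
    have : ∑ i, (w i : ℂ) = 1 := hM.1.trace_eq_sum_eigenvalues.symm.trans htr
    exact_mod_cast this
  have hsq : ∑ i, w i ^ 2 ≠ 1 := fun h => hmixed (by
    rw [hM.1.trace_mul_self]; exact_mod_cast h)
  obtain ⟨j, k, hjk, hj, hk⟩ := exists_ne_pos_pos_of_sum_sq_ne_one hM.eigenvalues_nonneg hsum hsq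
  obtain ⟨δ, hδ, hδsum, hδw⟩ :=
    exists_ne_zero_sum_eq_zero_abs_le hjk hj hk hM.eigenvalues_nonneg
  set φ := Unitary.conjStarAlgAut ℂ _ hM.1.eigenvectorUnitary
  have hφ_psd : ∀ f : n → ℝ, (∀ i, 0 ≤ f i) → (φ (diagonal fun i => (f i : ℂ))).PosSemidef :=
    fun f hf => by
      rw [Unitary.conjStarAlgAut_apply, star_eq_conjTranspose]
      exact (PosSemidef.diagonal fun i => by simpa using hf i).mul_mul_conjTranspose_same _
  have hM_eq : M = φ (diagonal fun i => (w i : ℂ)) := hM.1.spectral_theorem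
  have hadd : (M + φ (diagonal fun i => (δ i : ℂ))).PosSemidef := by
    rw [hM_eq, ← map_add, diagonal_add]
    exact_mod_cast hφ_psd (w + δ) fun i => by simp; linarith [(abs_le.mp (hδw i)).1]
  refine ⟨φ (diagonal fun i => (δ i : ℂ)), by simpa using hadd.1.sub hM.1, ?_, ?_, hadd, ?_⟩
  · rw [Ne, map_eq_zero_iff φ φ.injective, diagonal_eq_zero]
    exact fun h => hδ (funext fun i => by simpa using congrFun h i)
  · rw [trace_conjStarAlgAut, trace_diagonal]
    exact_mod_cast hδsum
  · rw [hM_eq, ← map_sub, diagonal_sub]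
    exact_mod_cast hφ_psd (w - δ) fun i => by simp; linarith [(abs_le.mp (hδw i)).2]

end

section
variable {Z ι n : Type*} [Fintype Z] [Fintype n]

def feasibleEnsembles (p : Z → ℝ) (A : Z → ι → Matrix n n ℂ) (b : ι → ℝ) :
    Set (Z → Matrix n n ℂ) :=
  {ρ | (∀ z, (ρ z).PosSemidef ∧ (ρ z).trace = 1) ∧
    ∀ i, ∑ z, (p z : ℂ) * (A z i * ρ z).trace = (b i : ℂ)}

variable {p : Z → ℝ} {A : Z → ι → Matrix n n ℂ} {b : ι → ℝ}

theorem isCompact_feasibleEnsembles : IsCompact (feasibleEnsembles p A b) := by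
  have hclosed : IsClosed (feasibleEnsembles p A b) := by
    simp only [feasibleEnsembles, Set.ofPred_and, Set.ofPred_forall]
    refine (isClosed_iInter fun z => ?_).inter (isClosed_iInter fun i => isClosed_eq ?_ ?_)
    · exact isCompact_setOf_posSemidef_trace_eq_one.isClosed.preimage
        (f := fun ρ : Z → Matrix n n ℂ => ρ z) (continuous_apply z)
    · fun_prop
    · fun_prop
  exact (isCompact_univ_pi fun _ : Z => isCompact_setOf_posSemidef_trace_eq_one).of_isClosed_subset
    hclosed fun ρ hρ z _ => hρ.1 z

theorem add_mem_feasibleEnsembles {σ Δ : Z → Matrix n n ℂ} (hσ : σ ∈ feasibleEnsembles p A b)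
    (hpsd : ∀ z, (σ z + Δ z).PosSemidef) (htr : ∀ z, (Δ z).trace = 0)
    (hcons : ∀ i, ∑ z, (p z : ℂ) * (A z i * Δ z).trace = 0) :
    σ + Δ ∈ feasibleEnsembles p A b := by
  refine ⟨fun z => ⟨hpsd z, by simp [trace_add, htr z, (hσ.1 z).2]⟩, fun i => ?_⟩
  simp only [Pi.add_apply, trace_add, mul_add, Finset.sum_add_distrib, hσ.2 i,
    hcons i, add_zero]

theorem exists_ne_zero_add_mem_sub_mem_feasibleEnsembles [Fintype ι] [DecidableEq n]
    (hA : ∀ z i, (A z i).IsHermitian) {σ : Z → Matrix n n ℂ} (hσ : σ ∈ feasibleEnsembles p A b)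
    (hmixed : Fintype.card ι < {z | (σ z * σ z).trace ≠ 1}.ncard) :
    ∃ Δ ≠ 0, σ + Δ ∈ feasibleEnsembles p A b ∧ σ - Δ ∈ feasibleEnsembles p A b := by
  classical
  have hH : ∀ z, ∃ H : Matrix n n ℂ, H.IsHermitian ∧ ((σ z * σ z).trace ≠ 1 → H ≠ 0) ∧
      H.trace = 0 ∧ (σ z + H).PosSemidef ∧ (σ z - H).PosSemidef := fun z => by
    by_cases hz : (σ z * σ z).trace ≠ 1
    · obtain ⟨H, hH, hne, htr, hadd, hsub⟩ :=
        (hσ.1 z).1.exists_isHermitian_ne_zero_trace_eq_zero (hσ.1 z).2 hz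
      exact ⟨H, hH, fun _ => hne, htr, hadd, hsub⟩
    · exact ⟨0, isHermitian_zero, fun h => absurd h hz, trace_zero _ _, by simpa using (hσ.1 z).1,
        by simpa using (hσ.1 z).1⟩
  choose H hherm hne htr hadd hsub using hH
  set S := Finset.univ.filter fun z => (σ z * σ z).trace ≠ 1
  have hS : Module.finrank ℝ (ι → ℝ) < S.card := by
    rw [Module.finrank_fintype_fun_eq_card]
    rwa [Set.ncard_eq_toFinset_card', Set.toFinset_ofPred] at hmixed
  obtain ⟨c, hrel, hc, -, z₀, hz₀, hcz₀⟩ :=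
    exists_sum_smul_eq_zero_of_finrank_lt_card hS fun z i => p z * (A z i * H z).trace.re
  have hcons : ∀ i, ∑ z, (p z : ℂ) * (A z i * (c z • H z)).trace = 0 := fun i => by
    have := congrArg (fun v : ι → ℝ => (v i : ℂ)) hrel
    simp only [Finset.sum_apply, Pi.smul_apply, smul_eq_mul, Complex.ofReal_sum,
      Complex.ofReal_mul, (hA _ i).ofReal_re_trace_mul (hherm _), Pi.zero_apply,
      Complex.ofReal_zero] at this
    simpa [Matrix.mul_smul, trace_smul, mul_left_comm] using this
  refine ⟨fun z => c z • H z, fun h => hne z₀ (Finset.mem_filter.mp hz₀).2 ?_, ?_, ?_⟩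
  · exact (smul_eq_zero.mp (congrFun h z₀)).resolve_left hcz₀
  · refine add_mem_feasibleEnsembles hσ (fun z => ?_) (fun z => by simp [trace_smul, htr z]) hcons
    exact (hadd z).add_smul_of_abs_le_one (hsub z) (hc z)
  · rw [sub_eq_add_neg]
    refine add_mem_feasibleEnsembles hσ (fun z => ?_) (fun z => by simp [trace_smul, htr z])
      fun i => by simpa [Matrix.mul_neg, trace_neg] using hcons i
    simpa [neg_smul] using (hadd z).add_smul_of_abs_le_one (hsub z) (t := -c z)
      (by simpa using hc z)

end

theorem exists_consistent_ensemble_with_at_most_R_mixed_states_general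
    {Z : Type*} [Fintype Z] (d R : ℕ)
    (p : Z → ℝ)
    (A : Z → Fin R → Matrix (Fin d) (Fin d) ℂ)
    (hA : ∀ z i, (A z i).IsHermitian)
    (b : Fin R → ℝ)
    (K : Set (Z → Matrix (Fin d) (Fin d) ℂ))
    (hK : K = {ρ | (∀ z, (ρ z).PosSemidef ∧ (ρ z).trace = 1) ∧
        ∀ i, ∑ z, (p z : ℂ) * (A z i * ρ z).trace = (b i : ℂ)})
    (hne : K.Nonempty) :
    ∃ σ ∈ K, {z : Z | (σ z * σ z).trace ≠ 1}.ncard ≤ R := by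
  change K = feasibleEnsembles p A b at hK
  subst hK
  obtain ⟨σ, hσ⟩ := isCompact_feasibleEnsembles.extremePoints_nonempty hne
  refine ⟨σ, hσ.1, not_lt.mp fun hmixed => ?_⟩
  obtain ⟨Δ, hΔ, hadd, hsub⟩ :=
    exists_ne_zero_add_mem_sub_mem_feasibleEnsembles hA hσ.1 (by simpa using hmixed)
  exact hΔ (eq_zero_of_add_mem_of_sub_mem_of_mem_extremePoints hσ hadd hsub)

/-- **Corollary of Theorem 1 of the paper.**
If the feasible set of ensembles consistent with `R` linear constraints is nonempty, it
contains an ensemble with at most `R` non-pure states. -/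
theorem exists_consistent_ensemble_with_at_most_R_mixed_states
    {Z : Type*} [Fintype Z] (d R : ℕ) (hd : 1 ≤ d)
    (p : Z → ℝ) (hp : ∀ z, 0 ≤ p z) (hp1 : ∑ z, p z = 1)
    (A : Z → Fin R → Matrix (Fin d) (Fin d) ℂ)
    (hA : ∀ z i, (A z i).IsHermitian)
    (b : Fin R → ℝ)
    (K : Set (Z → Matrix (Fin d) (Fin d) ℂ))
    (hK : K = {ρ | (∀ z, (ρ z).PosSemidef ∧ (ρ z).trace = 1) ∧
        ∀ i, ∑ z, (p z : ℂ) * (A z i * ρ z).trace = (b i : ℂ)})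
    (hne : K.Nonempty) :
    ∃ σ ∈ K, {z : Z | (σ z * σ z).trace ≠ 1}.ncard ≤ R :=
  exists_consistent_ensemble_with_at_most_R_mixed_states_general d R p A hA b K hK hne
end

section
/- Let Z be a finite set, p : Z → ℝ with p_z ≥ 0 and Σ_z p_z = 1, and let (ρ^Q_z)_{z∈Z} and (ρ^C_z)_{z∈Z} be families of d×d density matrices. On the space of complex d×d matrices with the Hilbert–Schmidt inner product ⟨A,B⟩ = Tr[A†B], define η^{CC}(X) = Σ_z p_z ρ^C_z · Tr[ρ^C_z X] and η^{QC}(X) = Σ_z p_z ρ^Q_z · Tr[ρ^C_z X], and let ζ be any linear map on d×d matrices satisfying η^{CC} ∘ ζ = (η^{QC})†. Then for every linear map 𝒩 on d×d matrices that is self-adjoint and positive semidefinite with respect to the Hilbert–Schmidt inner product, one has Σ_z p_z ⟨ρ^Q_z, 𝒩(ρ^Q_z)⟩ ≤ ‖𝒩‖_∞ (1 − STr[η^{QC} ∘ ζ]) + STr[𝒩 ∘ η^{QC} ∘ ζ], where ‖𝒩‖_∞ is the operator norm of 𝒩 with respect to the Hilbert–Schmidt norm and STr denotes the trace of a superoperator.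 -/
/-!
Put `T = η^{QC} ∘ ζ` and `s_z = ζ†(ρ^C_z)`. Since `η^{CC}` is self-adjoint, the equation for `ζ`
says `η^{QC} = ζ† ∘ η^{CC}`, so `T = Σ_z p_z |ρ^Q_z⟩⟨s_z| = Σ_z p_z |s_z⟩⟨s_z|`. Computing
`STr[M ∘ T]` from both expressions gives `Σ_z p_z ⟨s_z, M ρ^Q_z⟩ = Σ_z p_z ⟨s_z, M s_z⟩` for every
`M`, hence `Σ_z p_z ⟨ρ^Q_z - s_z, M (ρ^Q_z - s_z)⟩ = Σ_z p_z ⟨ρ^Q_z, M ρ^Q_z⟩ - STr[M ∘ T]` for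
self-adjoint `M`. Take `M = 𝒩` and `M = id`, bound `𝒩 ≤ ‖𝒩‖_∞`, and use `Tr[ρ²] ≤ 1`.
-/

open Matrix ComplexOrder

/-- The superoperator `X ↦ Σ_z p_z Tr[ρR_z X] • ρL_z` on `d×d` complex matrices.
With `ρL = ρ^Q, ρR = ρ^C` this is `η^{QC}`; with `ρL = ρR = ρ^C` it is `η^{CC}`. -/
noncomputable def etaMap {Z : Type*} [Fintype Z] {d : ℕ} (p : Z → ℝ)
    (ρL ρR : Z → Matrix (Fin d) (Fin d) ℂ) :
    Matrix (Fin d) (Fin d) ℂ →ₗ[ℂ] Matrix (Fin d) (Fin d) ℂ :=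
  ∑ z, (p z : ℂ) •
    LinearMap.smulRight
      (Matrix.traceLinearMap (Fin d) ℂ ℂ ∘ₗ LinearMap.mulLeft ℂ (ρR z)) (ρL z)

open RCLike InnerProductSpace

namespace InnerProductSpace

section SumRankOne

variable (𝕜 : Type*) {E Z : Type*} [RCLike 𝕜] [NormedAddCommGroup E] [InnerProductSpace 𝕜 E]
  [Fintype Z]

noncomputable def sumRankOne (p : Z → ℝ) (a c : Z → E) : E →ₗ[𝕜] E :=
  ∑ z, (p z : 𝕜) • (rankOne 𝕜 (a z) (c z) : E →ₗ[𝕜] E)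

variable {𝕜}

@[simp]
lemma sumRankOne_apply (p : Z → ℝ) (a c : Z → E) (x : E) :
    sumRankOne 𝕜 p a c x = ∑ z, ((p z : 𝕜) * inner 𝕜 (c z) x) • a z := by
  simp [sumRankOne, mul_smul]

lemma comp_sumRankOne (p : Z → ℝ) (a c : Z → E) (T : E →ₗ[𝕜] E) :
    T ∘ₗ sumRankOne 𝕜 p a c = sumRankOne 𝕜 p (fun z => T (a z)) c := by
  ext x; simp

lemma re_inner_sub_apply_sub {M : E →ₗ[𝕜] E} (hM : M.IsSymmetric) (x y : E) :
    re (inner 𝕜 (x - y) (M (x - y))) =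
      re (inner 𝕜 x (M x)) - 2 * re (inner 𝕜 y (M x)) + re (inner 𝕜 y (M y)) := by
  have hsymm : re (inner 𝕜 x (M y)) = re (inner 𝕜 y (M x)) := by
    rw [← hM, inner_re_symm]
  simp only [map_sub, inner_sub_left, inner_sub_right, hsymm]
  ring

variable [FiniteDimensional 𝕜 E]

lemma re_trace_comp_sumRankOne (p : Z → ℝ) (a c : Z → E) (T : E →ₗ[𝕜] E) :
    re (LinearMap.trace 𝕜 E (T ∘ₗ sumRankOne 𝕜 p a c)) =
      ∑ z, p z * re (inner 𝕜 (c z) (T (a z))) := by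
  rw [comp_sumRankOne, sumRankOne]
  simp [trace_rankOne]

lemma sumRankOne_comp (p : Z → ℝ) (a c : Z → E) (T : E →ₗ[𝕜] E) :
    sumRankOne 𝕜 p a c ∘ₗ T = sumRankOne 𝕜 p a (fun z => T.adjoint (c z)) := by
  ext x; simp [LinearMap.adjoint_inner_left]

lemma adjoint_sumRankOne (p : Z → ℝ) (a c : Z → E) :
    (sumRankOne 𝕜 p a c).adjoint = sumRankOne 𝕜 p c a := by
  refine ((LinearMap.eq_adjoint_iff _ _).mpr fun x y => ?_).symm
  simp only [sumRankOne_apply, sum_inner, inner_sum, inner_smul_left, inner_smul_right, map_mul,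
    conj_ofReal, inner_conj_symm]
  exact Finset.sum_congr rfl fun z _ => mul_right_comm _ _ _

lemma sumRankOne_comp_eq_of_comp_eq_adjoint {p : Z → ℝ} {a c : Z → E} {ζ : E →ₗ[𝕜] E}
    (hζ : sumRankOne 𝕜 p c c ∘ₗ ζ = (sumRankOne 𝕜 p a c).adjoint) :
    sumRankOne 𝕜 p a c ∘ₗ ζ =
      sumRankOne 𝕜 p (fun z => ζ.adjoint (c z)) (fun z => ζ.adjoint (c z)) := by
  have h : sumRankOne 𝕜 p a c = ζ.adjoint ∘ₗ sumRankOne 𝕜 p c c := by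
    rw [← LinearMap.adjoint_adjoint (sumRankOne 𝕜 p a c), ← hζ, LinearMap.adjoint_comp,
      adjoint_sumRankOne]
  rw [h, LinearMap.comp_assoc, sumRankOne_comp, comp_sumRankOne]

lemma sum_re_inner_sub_apply_sub {p : Z → ℝ} {a s : Z → E}
    (hs : sumRankOne 𝕜 p a s = sumRankOne 𝕜 p s s) {M : E →ₗ[𝕜] E} (hM : M.IsSymmetric) :
    ∑ z, p z * re (inner 𝕜 (a z - s z) (M (a z - s z))) =
      ∑ z, p z * re (inner 𝕜 (a z) (M (a z))) -
        re (LinearMap.trace 𝕜 E (M ∘ₗ sumRankOne 𝕜 p a s)) := by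
  have hcross := re_trace_comp_sumRankOne p a s M
  rw [hs, re_trace_comp_sumRankOne] at hcross
  simp only [re_inner_sub_apply_sub hM, mul_add, mul_sub, Finset.sum_add_distrib,
    Finset.sum_sub_distrib, re_trace_comp_sumRankOne, mul_left_comm (p _) 2, ← Finset.mul_sum]
  linarith

theorem sum_re_inner_apply_le {p : Z → ℝ} (hp : ∀ z, 0 ≤ p z) {a c : Z → E}
    (ha : ∑ z, p z * ‖a z‖ ^ 2 ≤ 1) {ζ : E →ₗ[𝕜] E}
    (hζ : sumRankOne 𝕜 p c c ∘ₗ ζ = (sumRankOne 𝕜 p a c).adjoint)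
    {N : E →ₗ[𝕜] E} (hN : N.IsSymmetric) {K : ℝ} (hK0 : 0 ≤ K)
    (hK : ∀ v, re (inner 𝕜 v (N v)) ≤ K * ‖v‖ ^ 2) :
    ∑ z, p z * re (inner 𝕜 (a z) (N (a z))) ≤
      K * (1 - re (LinearMap.trace 𝕜 E (sumRankOne 𝕜 p a c ∘ₗ ζ))) +
        re (LinearMap.trace 𝕜 E (N ∘ₗ sumRankOne 𝕜 p a c ∘ₗ ζ)) := by
  set s := fun z => ζ.adjoint (c z)
  have hT : sumRankOne 𝕜 p a c ∘ₗ ζ = sumRankOne 𝕜 p a s := sumRankOne_comp p a c ζ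
  have hs : sumRankOne 𝕜 p a s = sumRankOne 𝕜 p s s :=
    hT.symm.trans (sumRankOne_comp_eq_of_comp_eq_adjoint hζ)
  have hN_sub := sum_re_inner_sub_apply_sub hs hN
  have hid_sub := sum_re_inner_sub_apply_sub hs LinearMap.IsSymmetric.id
  simp only [LinearMap.id_apply, LinearMap.id_comp, inner_self_eq_norm_sq] at hid_sub
  rw [hT]
  calc ∑ z, p z * re (inner 𝕜 (a z) (N (a z)))
      = ∑ z, p z * re (inner 𝕜 (a z - s z) (N (a z - s z))) +
          re (LinearMap.trace 𝕜 E (N ∘ₗ sumRankOne 𝕜 p a s)) := by rw [hN_sub]; ring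
    _ ≤ K * ∑ z, p z * ‖a z - s z‖ ^ 2 +
          re (LinearMap.trace 𝕜 E (N ∘ₗ sumRankOne 𝕜 p a s)) := by
        gcongr ?_ + _
        rw [Finset.mul_sum]
        refine Finset.sum_le_sum fun z _ => ?_
        rw [mul_left_comm]
        exact mul_le_mul_of_nonneg_left (hK _) (hp z)
    _ ≤ _ := by
        rw [hid_sub]
        gcongr

end SumRankOne

section NumericalRange

variable {𝕜 E : Type*} [RCLike 𝕜] [NormedAddCommGroup E] [InnerProductSpace 𝕜 E]
  [FiniteDimensional 𝕜 E]

lemma bddAbove_abs_re_inner_apply (T : E →ₗ[𝕜] E) :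
    BddAbove {r | ∃ x : E, ‖x‖ = 1 ∧ r = |re (inner 𝕜 x (T x))|} := by
  refine ⟨‖LinearMap.toContinuousLinearMap T‖, ?_⟩
  rintro r ⟨x, hx, rfl⟩
  calc |re (inner 𝕜 x (T x))| ≤ ‖inner 𝕜 x (T x)‖ := abs_re_le_norm _
    _ ≤ ‖x‖ * ‖LinearMap.toContinuousLinearMap T x‖ := norm_inner_le_norm _ _
    _ ≤ ‖LinearMap.toContinuousLinearMap T‖ := by
        simpa [hx] using (LinearMap.toContinuousLinearMap T).le_opNorm x

lemma re_inner_apply_le_sSup_mul_norm_sq (T : E →ₗ[𝕜] E) (v : E) :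
    re (inner 𝕜 v (T v)) ≤
      sSup {r | ∃ x : E, ‖x‖ = 1 ∧ r = |re (inner 𝕜 x (T x))|} * ‖v‖ ^ 2 := by
  rcases eq_or_ne v 0 with rfl | hv
  · simp
  set x := (‖v‖⁻¹ : 𝕜) • v
  have hx : ‖x‖ = 1 := norm_smul_inv_norm hv
  have hvx : re (inner 𝕜 v (T v)) = ‖v‖ ^ 2 * re (inner 𝕜 x (T x)) := by
    simp only [x, map_smul, inner_smul_left, inner_smul_right, ← ofReal_inv, conj_ofReal,
      ← mul_assoc, ← ofReal_mul, re_ofReal_mul]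
    field_simp
  rw [hvx, mul_comm]
  gcongr
  exact (le_abs_self _).trans (le_csSup (bddAbove_abs_re_inner_apply T) ⟨x, hx, rfl⟩)

end NumericalRange

end InnerProductSpace

namespace Matrix

variable {m n 𝕜 : Type*} [RCLike 𝕜]

variable (m n 𝕜) in
noncomputable def hilbertSchmidtEquiv : Matrix m n 𝕜 ≃ₗ[𝕜] EuclideanSpace 𝕜 (m × n) :=
  (ofLinearEquiv 𝕜).symm ≪≫ₗ (LinearEquiv.curry 𝕜 𝕜 m n).symm ≪≫ₗ
    (WithLp.linearEquiv 2 𝕜 (m × n → 𝕜)).symm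

@[simp]
lemma hilbertSchmidtEquiv_apply (A : Matrix m n 𝕜) (ij : m × n) :
    hilbertSchmidtEquiv m n 𝕜 A ij = A ij.1 ij.2 := rfl

variable [Fintype m] [Fintype n]

lemma inner_hilbertSchmidtEquiv (A B : Matrix m n 𝕜) :
    inner 𝕜 (hilbertSchmidtEquiv m n 𝕜 A) (hilbertSchmidtEquiv m n 𝕜 B) = (Aᴴ * B).trace := by
  simp [PiLp.inner_apply, Fintype.sum_prod_type, trace, mul_apply, Finset.sum_comm (γ := m),
    mul_comm]

lemma norm_hilbertSchmidtEquiv_sq (A : Matrix m n 𝕜) :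
    ‖hilbertSchmidtEquiv m n 𝕜 A‖ ^ 2 = re (Aᴴ * A).trace := by
  rw [← inner_self_eq_norm_sq (𝕜 := 𝕜), inner_hilbertSchmidtEquiv]

lemma PosSemidef.re_trace_conjTranspose_mul_self_le {A : Matrix n n 𝕜} (hA : A.PosSemidef) :
    re (Aᴴ * A).trace ≤ re A.trace ^ 2 := by
  classical
  have hsq : (Aᴴ * A).trace = ∑ i, (hA.1.eigenvalues i : 𝕜) ^ 2 := by
    conv_lhs => rw [hA.1.eq, hA.1.spectral_theorem, ← map_mul, Unitary.conjStarAlgAut_apply,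
      trace_mul_cycle, Unitary.coe_star_mul_self, one_mul, diagonal_mul_diagonal, trace_diagonal]
    simp [sq]
  rw [hsq, hA.1.trace_eq_sum_eigenvalues]
  simp only [← ofReal_pow, ← ofReal_sum, ofReal_re]
  exact Finset.sum_sq_le_sq_sum_of_nonneg fun i _ => hA.eigenvalues_nonneg i

lemma hilbertSchmidtEquiv_conj_eq_adjoint {f g : Module.End 𝕜 (Matrix m n 𝕜)}
    (h : ∀ A B, ((f A)ᴴ * B).trace = (Aᴴ * g B).trace) :
    (hilbertSchmidtEquiv m n 𝕜).conj f = ((hilbertSchmidtEquiv m n 𝕜).conj g).adjoint := by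
  refine (LinearMap.eq_adjoint_iff _ _).mpr fun x y => ?_
  obtain ⟨A, rfl⟩ := (hilbertSchmidtEquiv m n 𝕜).surjective x
  obtain ⟨B, rfl⟩ := (hilbertSchmidtEquiv m n 𝕜).surjective y
  simpa [LinearEquiv.conj_apply_apply, inner_hilbertSchmidtEquiv] using h A B

lemma re_inner_hilbertSchmidtEquiv_conj_apply_le (N : Module.End 𝕜 (Matrix m n 𝕜))
    (v : EuclideanSpace 𝕜 (m × n)) :
    re (inner 𝕜 v ((hilbertSchmidtEquiv m n 𝕜).conj N v)) ≤
      sSup {r : ℝ | ∃ X : Matrix m n 𝕜, (Xᴴ * X).trace = 1 ∧ r = |re (Xᴴ * N X).trace|} *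
        ‖v‖ ^ 2 := by
  have hnorm (X : Matrix m n 𝕜) : (Xᴴ * X).trace = 1 ↔ ‖hilbertSchmidtEquiv m n 𝕜 X‖ = 1 := by
    rw [← inner_hilbertSchmidtEquiv, inner_self_eq_norm_sq_to_K]
    norm_cast
    exact pow_eq_one_iff_of_nonneg (norm_nonneg _) two_ne_zero
  convert re_inner_apply_le_sSup_mul_norm_sq ((hilbertSchmidtEquiv m n 𝕜).conj N) v using 4
  ext r
  simp only [(hilbertSchmidtEquiv m n 𝕜).surjective.exists, hnorm,
    LinearEquiv.conj_apply_apply, LinearEquiv.symm_apply_apply, inner_hilbertSchmidtEquiv]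

end Matrix

lemma hilbertSchmidtEquiv_conj_etaMap {Z : Type*} [Fintype Z] {d : ℕ} (p : Z → ℝ)
    (ρL ρR : Z → Matrix (Fin d) (Fin d) ℂ) (hR : ∀ z, (ρR z).IsHermitian) :
    (hilbertSchmidtEquiv (Fin d) (Fin d) ℂ).conj (etaMap p ρL ρR) =
      sumRankOne ℂ p (fun z => hilbertSchmidtEquiv _ _ ℂ (ρL z))
        (fun z => hilbertSchmidtEquiv _ _ ℂ (ρR z)) := by
  refine LinearMap.ext fun x => ?_
  obtain ⟨X, rfl⟩ := (hilbertSchmidtEquiv (Fin d) (Fin d) ℂ).surjective x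
  simp [LinearEquiv.conj_apply_apply, etaMap, inner_hilbertSchmidtEquiv, (hR _).eq, mul_smul,
    Complex.coe_smul]

theorem quadratic_average_le_superoperator_trace_general
    {Z : Type*} [Fintype Z] {d : ℕ}
    (p : Z → ℝ) (hp : ∀ z, 0 ≤ p z) (hp1 : ∑ z, p z = 1)
    (ρQ ρC : Z → Matrix (Fin d) (Fin d) ℂ)
    (hρQ : ∀ z, (ρQ z).PosSemidef ∧ (ρQ z).trace = 1)
    (hρC : ∀ z, (ρC z).PosSemidef ∧ (ρC z).trace = 1)
    (ζ : Matrix (Fin d) (Fin d) ℂ →ₗ[ℂ] Matrix (Fin d) (Fin d) ℂ)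
    (hζ : ∀ A B : Matrix (Fin d) (Fin d) ℂ,
      (((etaMap p ρC ρC) (ζ A))ᴴ * B).trace = (Aᴴ * (etaMap p ρQ ρC) B).trace)
    (N : Matrix (Fin d) (Fin d) ℂ →ₗ[ℂ] Matrix (Fin d) (Fin d) ℂ)
    (hNsa : ∀ A B : Matrix (Fin d) (Fin d) ℂ, ((N A)ᴴ * B).trace = (Aᴴ * N B).trace)
    (Nnorm : ℝ)
    (hNnorm : Nnorm = sSup {r : ℝ | ∃ X : Matrix (Fin d) (Fin d) ℂ,
        (Xᴴ * X).trace = 1 ∧ r = |((Xᴴ * N X).trace).re|}) :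
    ∑ z, p z * (((ρQ z)ᴴ * N (ρQ z)).trace).re
      ≤ Nnorm * (1 - (LinearMap.trace ℂ (Matrix (Fin d) (Fin d) ℂ)
            ((etaMap p ρQ ρC) ∘ₗ ζ)).re)
        + (LinearMap.trace ℂ (Matrix (Fin d) (Fin d) ℂ)
            (N ∘ₗ (etaMap p ρQ ρC) ∘ₗ ζ)).re := by
  set e := hilbertSchmidtEquiv (Fin d) (Fin d) ℂ
  have hη (ρL : Z → Matrix (Fin d) (Fin d) ℂ) : e.conj (etaMap p ρL ρC) =
      sumRankOne ℂ p (fun z => e (ρL z)) (fun z => e (ρC z)) :=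
    hilbertSchmidtEquiv_conj_etaMap p ρL ρC fun z => (hρC z).1.1
  have hζ' : sumRankOne ℂ p (fun z => e (ρC z)) (fun z => e (ρC z)) ∘ₗ e.conj ζ =
      (sumRankOne ℂ p (fun z => e (ρQ z)) (fun z => e (ρC z))).adjoint := by
    rw [← hη, ← hη, ← LinearEquiv.conj_comp]
    exact hilbertSchmidtEquiv_conj_eq_adjoint hζ
  have hN : (e.conj N).IsSymmetric :=
    (LinearMap.eq_adjoint_iff _ _).mp (hilbertSchmidtEquiv_conj_eq_adjoint hNsa)
  have hpure (z) : ‖e (ρQ z)‖ ^ 2 ≤ 1 := by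
    rw [norm_hilbertSchmidtEquiv_sq]
    simpa [(hρQ z).2] using (hρQ z).1.re_trace_conjTranspose_mul_self_le
  have hpure_avg : ∑ z, p z * ‖e (ρQ z)‖ ^ 2 ≤ 1 := hp1 ▸
    Finset.sum_le_sum fun z _ => mul_le_of_le_one_right (hp z) (hpure z)
  have hNnorm0 : 0 ≤ Nnorm := hNnorm ▸ Real.sSup_nonneg fun r ⟨_, _, hr⟩ => hr ▸ abs_nonneg _
  have hK (v) : re (inner ℂ v (e.conj N v)) ≤ Nnorm * ‖v‖ ^ 2 := by
    rw [hNnorm]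
    exact re_inner_hilbertSchmidtEquiv_conj_apply_le N v
  have key := sum_re_inner_apply_le hp hpure_avg hζ' hN hNnorm0 hK
  rw [← hη, ← LinearEquiv.conj_comp, ← LinearEquiv.conj_comp, LinearMap.trace_conj',
    LinearMap.trace_conj'] at key
  simpa [e, LinearEquiv.conj_apply_apply, inner_hilbertSchmidtEquiv] using key

/-- **Upper bound for convex quadratic ensemble averages (Eq. (32) of the paper).** For
any positive semidefinite self-adjoint superoperator 𝒩,
`Σ_z p_z ⟨ρ^Q_z, 𝒩(ρ^Q_z)⟩ ≤ ‖𝒩‖_∞ (1 − STr[η^{QC} ∘ ζ]) + STr[𝒩 ∘ η^{QC} ∘ ζ]`,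
where ζ solves `η^{CC} ∘ ζ = (η^{QC})†` and `‖𝒩‖_∞ = sup_{⟨X,X⟩=1} |⟨X, 𝒩(X)⟩|`. -/
theorem quadratic_average_le_superoperator_trace
    {Z : Type*} [Fintype Z] {d : ℕ}
    (p : Z → ℝ) (hp : ∀ z, 0 ≤ p z) (hp1 : ∑ z, p z = 1)
    (ρQ ρC : Z → Matrix (Fin d) (Fin d) ℂ)
    (hρQ : ∀ z, (ρQ z).PosSemidef ∧ (ρQ z).trace = 1)
    (hρC : ∀ z, (ρC z).PosSemidef ∧ (ρC z).trace = 1)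
    (ζ : Matrix (Fin d) (Fin d) ℂ →ₗ[ℂ] Matrix (Fin d) (Fin d) ℂ)
    (hζ : ∀ A B : Matrix (Fin d) (Fin d) ℂ,
      (((etaMap p ρC ρC) (ζ A))ᴴ * B).trace = (Aᴴ * (etaMap p ρQ ρC) B).trace)
    (N : Matrix (Fin d) (Fin d) ℂ →ₗ[ℂ] Matrix (Fin d) (Fin d) ℂ)
    (hNsa : ∀ A B : Matrix (Fin d) (Fin d) ℂ, ((N A)ᴴ * B).trace = (Aᴴ * N B).trace)
    (hNpos : ∀ X : Matrix (Fin d) (Fin d) ℂ, 0 ≤ ((Xᴴ * N X).trace).re)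
    (Nnorm : ℝ)
    (hNnorm : Nnorm = sSup {r : ℝ | ∃ X : Matrix (Fin d) (Fin d) ℂ,
        (Xᴴ * X).trace = 1 ∧ r = |((Xᴴ * N X).trace).re|}) :
    ∑ z, p z * (((ρQ z)ᴴ * N (ρQ z)).trace).re
      ≤ Nnorm * (1 - (LinearMap.trace ℂ (Matrix (Fin d) (Fin d) ℂ)
            ((etaMap p ρQ ρC) ∘ₗ ζ)).re)
        + (LinearMap.trace ℂ (Matrix (Fin d) (Fin d) ℂ)
            (N ∘ₗ (etaMap p ρQ ρC) ∘ₗ ζ)).re :=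
  quadratic_average_le_superoperator_trace_general p hp hp1 ρQ ρC hρQ hρC ζ hζ N hNsa Nnorm hNnorm
end
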